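/- Fix α ∈ (0,2), δ > 0, 0 < γ < δ/2, λ > 0, and let ω be the modulus of continuity ω(ξ) := δλ^{−1}ξ − (δ/4)λ^{−1−α/2}ξ^{1+α/2} for 0 < ξ ≤ λ and ω(ξ) := (3/4)δ + γ log(ξ/λ) for ξ > λ. Let ρ : ℝ×[0,T] → ℝ be smooth and 1-periodic in x, and suppose ρ(·,0) obeys ω. Suppose the set S := { t ∈ (0,T] : ρ(·,t) does not obey ω } is nonempty, and let t₁ := inf S. Then t₁ > 0, the non-strict bound |ρ(x̃,t₁) − ρ(ỹ,t₁)| ≤ ω(|x̃−ỹ|) holds for all x̃, ỹ ∈ ℝ, and there exist two distinct points x ≠ y with ρ(x,t₁) − ρ(y,t₁) = ω(|x−y|). -/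

import Mathlib

open Real MeasureTheory Filter Set Topology
open scoped ContDiff

noncomputable section

/-- Principal-value Lévy operator: (𝓛 f)(x) = p.v. ∫ φ(x-y)(f(x)-f(y)) dy. -/
def levy (φ f : ℝ → ℝ) (x : ℝ) : ℝ :=
  limUnder (nhdsWithin (0:ℝ) (Set.Ioi 0))
    (fun ε => ∫ y in {y : ℝ | ε ≤ |x - y|}, φ (x - y) * (f x - f y))

/-- Principal-value alignment force. -/
def alignForce (φ ρ u : ℝ → ℝ) (x : ℝ) : ℝ :=
  limUnder (nhdsWithin (0:ℝ) (Set.Ioi 0))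
    (fun ε => ∫ y in {y : ℝ | ε ≤ |x - y|}, φ (x - y) * (u y - u x) * ρ y)

/-- Periodization -/
def phiS (φ : ℝ → ℝ) (x : ℝ) : ℝ := ∑' k : ℤ, φ (x + (k : ℝ))

def supNorm (f : ℝ → ℝ) : ℝ := ⨆ x : ℝ, |f x|

structure A12 (φ : ℝ → ℝ) (α a₀ c₁ c₂ : ℝ) : Prop where
  αpos : 0 < α
  αlt : α < 2
  a₀pos : 0 < a₀
  a₀le : a₀ ≤ 1/2
  c₁ge : 1 ≤ c₁
  c₂pos : 0 < c₂
  even : ∀ x : ℝ, φ (-x) = φ x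
  smooth : ContDiffOn ℝ 4 φ {(0:ℝ)}ᶜ
  lower : ∀ x : ℝ, x ≠ 0 → |x| ≤ a₀ → c₁⁻¹ * |x| ^ (-(1+α)) ≤ φ x
  upper : ∀ x : ℝ, x ≠ 0 → |x| ≤ a₀ → φ x ≤ c₁ * |x| ^ (-(1+α))
  derivBound : ∀ j : ℕ, 1 ≤ j → j ≤ 4 → ∀ x : ℝ, x ≠ 0 → |x| ≤ a₀ →
    |iteratedDeriv j φ x| ≤ c₁ * |x| ^ (-(1+(j:ℝ)+α))
  mono : ∀ r s : ℝ, 0 < r → r ≤ s → s ≤ a₀ → φ s ≤ φ r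
  tailInt : ∀ j : ℕ, j ≤ 4 →
    IntegrableOn (fun x : ℝ => |x| ^ (j:ℝ) * |iteratedDeriv j φ x|) {x : ℝ | a₀ ≤ |x|}
  tailBound : ∀ j : ℕ, j ≤ 4 →
    (∫ x in {x : ℝ | a₀ ≤ |x|}, |x| ^ (j:ℝ) * |iteratedDeriv j φ x|) ≤ c₂

structure EASol (φ : ℝ → ℝ) (T : ℝ) (ρ u : ℝ → ℝ → ℝ) : Prop where
  smooth_rho : ContDiffOn ℝ (⊤ : ℕ∞) (Function.uncurry ρ) (Set.univ ×ˢ Set.Icc 0 T)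
  smooth_u : ContDiffOn ℝ (⊤ : ℕ∞) (Function.uncurry u) (Set.univ ×ˢ Set.Icc 0 T)
  periodic_rho : ∀ x t, ρ (x + 1) t = ρ x t
  periodic_u : ∀ x t, u (x + 1) t = u x t
  mass : ∀ x : ℝ, ∀ t ∈ Set.Icc 0 T,
    derivWithin (fun s => ρ x s) (Set.Icc 0 T) t + deriv (fun y => ρ y t * u y t) x = 0
  mom : ∀ x : ℝ, ∀ t ∈ Set.Icc 0 T,
    derivWithin (fun s => u x s) (Set.Icc 0 T) t + u x t * deriv (fun y => u y t) x
      = alignForce φ (fun y => ρ y t) (fun y => u y t) x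

/-- The rescaled modulus of continuity `ω` with parameters `δ, γ, λ`. -/
def moc (α δ γ lam : ℝ) (ξ : ℝ) : ℝ :=
  if ξ ≤ lam then δ * lam⁻¹ * ξ - δ / 4 * lam ^ (-(1:ℝ) - α/2) * ξ ^ (1 + α/2)
  else 3 * δ / 4 + γ * Real.log (ξ / lam)

section mocLemmas
variable {α δ γ lam : ℝ} (hα : 0 < α) (hα2 : α < 2) (hδ : 0 < δ) (hγ0 : 0 < γ)
  (hlam : 0 < lam)

include hα hlam in
lemma moc_boundary :
    δ * lam⁻¹ * lam - δ / 4 * lam ^ (-(1:ℝ) - α/2) * lam ^ (1 + α/2)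
      = 3 * δ / 4 + γ * Real.log (lam / lam) := by
  rw [mul_assoc (δ/4), ← Real.rpow_add hlam, show -(1:ℝ) - α/2 + (1+α/2) = 0 by ring,
    Real.rpow_zero, div_self hlam.ne', Real.log_one, mul_assoc,
    inv_mul_cancel₀ hlam.ne']
  ring

include hα hα2 hδ hγ0 hlam in
lemma moc_pos {ξ : ℝ} (hξ : 0 < ξ) : 0 < moc α δ γ lam ξ := by
  rw [moc]
  split_ifs with h
  · have h1 : ξ ^ (1 + α/2) = ξ * ξ ^ (α/2) := by
      rw [Real.rpow_add hξ, Real.rpow_one]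
    have h2 : ξ ^ (α/2) ≤ lam ^ (α/2) := Real.rpow_le_rpow hξ.le h (by positivity)
    have h3 : lam ^ (-(1:ℝ) - α/2) * lam ^ (α/2) = lam⁻¹ := by
      rw [← Real.rpow_add hlam, show -(1:ℝ) - α/2 + α/2 = -1 by ring, Real.rpow_neg_one]
    have h4 : δ / 4 * lam ^ (-(1:ℝ) - α/2) * ξ ^ (1 + α/2)
        ≤ δ / 4 * lam⁻¹ * ξ := by
      rw [h1]
      calc δ / 4 * lam ^ (-(1:ℝ) - α/2) * (ξ * ξ ^ (α/2))
          ≤ δ / 4 * lam ^ (-(1:ℝ) - α/2) * (ξ * lam ^ (α/2)) := by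
            gcongr
        _ = δ / 4 * lam⁻¹ * ξ := by
            rw [show δ / 4 * lam ^ (-(1:ℝ) - α/2) * (ξ * lam ^ (α/2))
              = δ / 4 * (lam ^ (-(1:ℝ) - α/2) * lam ^ (α/2)) * ξ by ring, h3]
    have h5 : 0 < δ * lam⁻¹ * ξ := by positivity
    have h6 : δ / 4 * lam⁻¹ * ξ < δ * lam⁻¹ * ξ := by
      have h6 : (0:ℝ) < 3/4 - α/8 := by linarith
      have h7 : (0:ℝ) < lam⁻¹ := by positivity
      nlinarith [mul_pos (mul_pos hδ h7) h6]
    linarith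
  · push_neg at h
    have : 0 < Real.log (ξ / lam) := Real.log_pos (by rw [lt_div_iff₀ hlam] at *; linarith)
    positivity

include hα hα2 hδ hγ0 hlam in
lemma moc_mono {a b : ℝ} (ha : 0 < a) (hab : a ≤ b) :
    moc α δ γ lam a ≤ moc α δ γ lam b := by
  -- first: strict mono on Icc 0 lam of branch 1
  set f₁ : ℝ → ℝ := fun ξ => δ * lam⁻¹ * ξ - δ / 4 * lam ^ (-(1:ℝ) - α/2) * ξ ^ (1 + α/2)
    with hf₁
  have hder : ∀ x : ℝ, HasDerivAt f₁
      (δ * lam⁻¹ - δ / 4 * lam ^ (-(1:ℝ) - α/2) * ((1 + α/2) * x ^ (α/2))) x := by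
    intro x
    have h1 : HasDerivAt (fun ξ : ℝ => δ * lam⁻¹ * ξ) (δ * lam⁻¹) x := by
      simpa using (hasDerivAt_id x).const_mul (δ * lam⁻¹)
    have h2 : HasDerivAt (fun ξ : ℝ => ξ ^ (1 + α/2)) ((1 + α/2) * x ^ (α/2)) x := by
      have := Real.hasDerivAt_rpow_const (x := x) (p := 1 + α/2) (Or.inr (by linarith))
      simpa [show 1 + α/2 - 1 = α/2 by ring] using this
    exact h1.sub (h2.const_mul (δ / 4 * lam ^ (-(1:ℝ) - α/2)))
  have hderpos : ∀ x ∈ interior (Icc (0:ℝ) lam), 0 < deriv f₁ x := by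
    intro x hx
    rw [interior_Icc, mem_Ioo] at hx
    rw [(hder x).deriv]
    have h2 : x ^ (α/2) ≤ lam ^ (α/2) := Real.rpow_le_rpow hx.1.le hx.2.le (by positivity)
    have h3 : lam ^ (-(1:ℝ) - α/2) * lam ^ (α/2) = lam⁻¹ := by
      rw [← Real.rpow_add hlam, show -(1:ℝ) - α/2 + α/2 = -1 by ring, Real.rpow_neg_one]
    have h4 : δ / 4 * lam ^ (-(1:ℝ) - α/2) * ((1 + α/2) * x ^ (α/2))
        ≤ δ / 4 * (1 + α/2) * lam⁻¹ := by
      calc δ / 4 * lam ^ (-(1:ℝ) - α/2) * ((1 + α/2) * x ^ (α/2))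
          ≤ δ / 4 * lam ^ (-(1:ℝ) - α/2) * ((1 + α/2) * lam ^ (α/2)) := by
            gcongr
        _ = δ / 4 * (1 + α/2) * (lam ^ (-(1:ℝ) - α/2) * lam ^ (α/2)) := by ring
        _ = δ / 4 * (1 + α/2) * lam⁻¹ := by rw [h3]
    have h5 : δ / 4 * (1 + α/2) * lam⁻¹ < δ * lam⁻¹ := by
      have h6 : (0:ℝ) < 3/4 - α/8 := by linarith
      have h7 : (0:ℝ) < lam⁻¹ := by positivity
      nlinarith [mul_pos (mul_pos hδ h7) h6]
    linarith
  have hmono : StrictMonoOn f₁ (Icc (0:ℝ) lam) := by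
    apply strictMonoOn_of_deriv_pos (convex_Icc 0 lam) _ hderpos
    exact (Continuous.continuousOn (by
      have : Continuous (fun ξ : ℝ => ξ ^ (1 + α/2)) :=
        Real.continuous_rpow_const (by positivity)
      fun_prop))
  rcases le_or_gt b lam with hb | hb
  · rw [moc, moc, if_pos hb, if_pos (hab.trans hb)]
    exact hmono.monotoneOn ⟨ha.le, hab.trans hb⟩ ⟨by linarith, hb⟩ hab
  rcases le_or_gt a lam with haa | haa
  · rw [moc, moc, if_pos haa, if_neg (not_le.mpr hb)]
    have h1 : f₁ a ≤ f₁ lam := hmono.monotoneOn ⟨ha.le, haa⟩ ⟨hlam.le, le_rfl⟩ haa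
    have h2 : f₁ lam = 3 * δ / 4 := by
      have := moc_boundary (α := α) (δ := δ) (γ := γ) hα hlam
      simp only [hf₁]
      rw [this, div_self hlam.ne', Real.log_one]; ring
    have h3 : 0 ≤ Real.log (b / lam) :=
      Real.log_nonneg (by rw [le_div_iff₀ hlam]; linarith)
    have : 0 ≤ γ * Real.log (b / lam) := by positivity
    calc f₁ a ≤ 3 * δ / 4 := h2 ▸ h1
      _ ≤ 3 * δ / 4 + γ * Real.log (b / lam) := by linarith
  · rw [moc, moc, if_neg (not_le.mpr haa), if_neg (not_le.mpr hb)]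
    have : Real.log (a / lam) ≤ Real.log (b / lam) := by
      apply Real.log_le_log (by positivity)
      gcongr
    nlinarith

include hα hδ hγ0 hlam in
lemma moc_continuous : Continuous (moc α δ γ lam) := by
  have h1 : Continuous (fun ξ : ℝ => δ * lam⁻¹ * ξ
      - δ / 4 * lam ^ (-(1:ℝ) - α/2) * ξ ^ (1 + α/2)) := by
    have : Continuous (fun ξ : ℝ => ξ ^ (1 + α/2)) :=
      Real.continuous_rpow_const (by positivity)
    fun_prop
  have h2 : ContinuousOn (fun ξ : ℝ => 3 * δ / 4 + γ * Real.log (ξ / lam))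
      {x : ℝ | lam ≤ x} := by
    apply continuousOn_const.add (ContinuousOn.mul continuousOn_const _)
    apply ContinuousOn.comp Real.continuousOn_log (by fun_prop)
    intro x hx
    simp only [mem_setOf_eq, mem_compl_iff, mem_singleton_iff] at *
    exact (div_pos (hlam.trans_le hx) hlam).ne'
  have := continuous_if_le (continuous_id) (continuous_const : Continuous fun _ : ℝ => lam)
    h1.continuousOn h2 (fun x hx => by rw [show x = lam from hx]; exact moc_boundary hα hlam)
  exact this
end mocLemmas

lemma slice_gap {X : Type*} [MetricSpace X] {D : Set (X × ℝ)} (hD : IsCompact D)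
    {h : X × ℝ → ℝ} (hh : ContinuousOn h D) {t₀ : ℝ}
    (hslice : ∀ p ∈ D, p.2 = t₀ → 0 < h p) :
    ∃ ε > 0, ∀ p ∈ D, |p.2 - t₀| < ε → 0 < h p := by
  by_contra hc
  push_neg at hc
  choose! p hpD hpt hph using fun n : ℕ => hc (1/(n+1)) (by positivity)
  obtain ⟨q, hqD, φ, hφ, hconv⟩ := hD.tendsto_subseq hpD
  have h1 : Tendsto (fun n => (p (φ n)).2 - t₀) atTop (𝓝 0) := by
    apply squeeze_zero_norm (fun n => ?_) tendsto_one_div_add_atTop_nhds_zero_nat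
    have := (hpt (φ n)).le
    calc ‖(p (φ n)).2 - t₀‖ ≤ 1/((φ n : ℝ)+1) := this
      _ ≤ 1/((n : ℝ)+1) := by
          gcongr
          exact_mod_cast hφ.le_apply
  have h2 : Tendsto (fun n => (p (φ n)).2) atTop (𝓝 t₀) := by
    simpa using h1.add_const t₀
  have hq2 : q.2 = t₀ :=
    tendsto_nhds_unique ((continuous_snd.tendsto q).comp hconv) h2
  have h3 : Tendsto (fun n => h (p (φ n))) atTop (𝓝 (h q)) :=
    (hh q hqD).tendsto.comp
      (tendsto_nhdsWithin_iff.mpr ⟨hconv, Eventually.of_forall (fun n => hpD _)⟩)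
  have h4 : h q ≤ 0 := le_of_tendsto h3 (Eventually.of_forall fun n => hph (φ n))
  linarith [hslice q hqD hq2]

lemma abs_sub_round_le_abs (z : ℝ) : |z - round z| ≤ |z| := by
  rcases le_or_gt (1/2) |z| with h | h
  · exact (abs_sub_round z).trans h
  · have h2 := abs_lt.mp h
    have : round z = 0 := by
      rw [round_eq]
      apply Int.floor_eq_zero_iff.mpr
      constructor <;> simp <;> linarith
    simp [this]

section derivLt
variable {α δ γ lam : ℝ}

lemma deriv_lt (hα : 0 < α) (hα2 : α < 2) (hδ : 0 < δ) (hγ0 : 0 < γ) (hlam : 0 < lam)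
    {f : ℝ → ℝ} (hf : ContDiff ℝ ∞ f)
    (hob : ∀ x y : ℝ, x ≠ y → |f x - f y| < moc α δ γ lam |x - y|) (x₀ : ℝ) :
    |deriv f x₀| < δ * lam⁻¹ := by
  have hf1 : Differentiable ℝ f := hf.differentiable (by simp)
  have hf2 : ContDiff ℝ ∞ (deriv f) := (contDiff_infty_iff_deriv.mp hf).2
  have hf3 : Differentiable ℝ (deriv f) := hf2.differentiable (by simp)
  have hf4 : Continuous (deriv (deriv f)) := (contDiff_infty_iff_deriv.mp hf2).2.continuous
  obtain ⟨C0, hC0⟩ := (isCompact_Icc (a := x₀ - 1) (b := x₀ + 1)).exists_bound_of_continuousOn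
    hf4.continuousOn
  set C := max C0 1 with hCdef
  have hC1 : (1:ℝ) ≤ C := le_max_right _ _
  have hCpos : (0:ℝ) < C := by linarith
  have hC : ∀ z ∈ Icc (x₀ - 1) (x₀ + 1), ‖deriv (deriv f) z‖ ≤ C :=
    fun z hz => (hC0 z hz).trans (le_max_left _ _)
  -- Lipschitz bound for deriv f near x₀
  have hlip : ∀ z ∈ Icc x₀ (x₀ + 1), |deriv f z - deriv f x₀| ≤ C * (z - x₀) := by
    intro z hz
    have hmem : ∀ w, w ∈ Icc x₀ (x₀+1) → w ∈ Icc (x₀ - 1) (x₀ + 1) := by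
      intro w hw; exact ⟨by linarith [hw.1], hw.2⟩
    have := (convex_Icc (x₀ - 1) (x₀ + 1)).norm_image_sub_le_of_norm_hasDerivWithin_le
      (f := deriv f) (f' := deriv (deriv f))
      (fun w hw => (hf3 w).hasDerivAt.hasDerivWithinAt) hC
      (⟨by linarith, by linarith⟩ : x₀ ∈ Icc (x₀-1) (x₀+1)) (hmem z hz)
    calc |deriv f z - deriv f x₀| ≤ C * ‖z - x₀‖ := this
      _ = C * (z - x₀) := by rw [Real.norm_eq_abs, abs_of_nonneg (by linarith [hz.1])]
  set c := δ / 4 * lam ^ (-(1:ℝ) - α/2) with hcdef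
  have hcpos : 0 < c := by
    have := Real.rpow_pos_of_pos hlam (-(1:ℝ) - α/2); positivity
  set q := (c / (2*C)) ^ ((2:ℝ)/(2-α)) with hqdef
  have hqpos : 0 < q := Real.rpow_pos_of_pos (by positivity) _
  set h := min 1 (min lam q) with hhdef
  have hh : 0 < h := lt_min one_pos (lt_min hlam hqpos)
  have hh1 : h ≤ 1 := min_le_left _ _
  have hhlam : h ≤ lam := le_trans (min_le_right _ _) (min_le_left _ _)
  have hhq : h ≤ q := le_trans (min_le_right _ _) (min_le_right _ _)
  have hkey : C * h ≤ c/2 * h ^ (α/2) := by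
    have e1 : h ^ ((1:ℝ) - α/2) ≤ q ^ ((1:ℝ) - α/2) :=
      Real.rpow_le_rpow hh.le hhq (by linarith)
    have e2 : q ^ ((1:ℝ) - α/2) = c/(2*C) := by
      rw [hqdef, ← Real.rpow_mul (by positivity),
        show (2:ℝ)/(2-α) * (1 - α/2) = 1 by rw [div_mul_eq_mul_div, div_eq_one_iff_eq (by linarith : (2:ℝ)-α ≠ 0)]; ring, Real.rpow_one]
    have e3 : h = h ^ ((1:ℝ) - α/2) * h ^ (α/2) := by
      rw [← Real.rpow_add hh, show (1:ℝ) - α/2 + α/2 = 1 by ring, Real.rpow_one]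
    have e4 : (0:ℝ) < h ^ (α/2) := Real.rpow_pos_of_pos hh _
    calc C * h = C * (h ^ ((1:ℝ) - α/2) * h ^ (α/2)) := by rw [← e3]
      _ ≤ C * ((c/(2*C)) * h ^ (α/2)) := by
          apply mul_le_mul_of_nonneg_left _ hCpos.le
          apply mul_le_mul_of_nonneg_right _ e4.le
          rw [← e2]; exact e1
      _ = c/2 * h ^ (α/2) := by field_simp
  -- Taylor estimate
  have htay : |f (x₀ + h) - f x₀ - deriv f x₀ * h| ≤ C * h * h := by
    set φ := fun z : ℝ => f z - z * deriv f x₀ with hφdef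
    have hφ : ∀ z ∈ Icc x₀ (x₀ + h), HasDerivWithinAt φ
        (deriv f z - deriv f x₀) (Icc x₀ (x₀ + h)) z := by
      intro z hz
      exact ((hf1 z).hasDerivAt.sub (hasDerivAt_mul_const (deriv f x₀))).hasDerivWithinAt
    have hbd : ∀ z ∈ Icc x₀ (x₀ + h), ‖deriv f z - deriv f x₀‖ ≤ C * h := by
      intro z hz
      have h1 := hlip z ⟨hz.1, by linarith [hz.2]⟩
      have : C * (z - x₀) ≤ C * h := by
        apply mul_le_mul_of_nonneg_left _ hCpos.le; linarith [hz.2]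
      exact le_trans h1 this
    have := (convex_Icc x₀ (x₀ + h)).norm_image_sub_le_of_norm_hasDerivWithin_le hφ hbd
      (left_mem_Icc.mpr (by linarith)) (right_mem_Icc.mpr (by linarith))
    have e : φ (x₀ + h) - φ x₀ = f (x₀ + h) - f x₀ - deriv f x₀ * h := by
      simp only [hφdef]; ring
    rw [Real.norm_eq_abs, e, Real.norm_eq_abs,
      show x₀ + h - x₀ = h by ring, abs_of_pos hh] at this
    linarith
  -- modulus bound
  have hmoc : |f (x₀ + h) - f x₀| < δ * lam⁻¹ * h - c * h ^ (1 + α/2) := by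
    have hne : x₀ + h ≠ x₀ := by intro e; nlinarith [congrArg (· - x₀) e]
    have := hob (x₀ + h) x₀ hne
    rw [show x₀ + h - x₀ = h by ring, abs_of_pos hh] at this
    rw [moc, if_pos hhlam] at this
    exact this
  have h15 : h ^ ((1:ℝ) + α/2) = h * h ^ (α/2) := by
    rw [Real.rpow_add hh, Real.rpow_one]
  have e4 : (0:ℝ) < h ^ (α/2) := Real.rpow_pos_of_pos hh _
  have hfin : |deriv f x₀| * h < δ * lam⁻¹ * h := by
    have habs : |deriv f x₀ * h| ≤ |f (x₀ + h) - f x₀| + |f (x₀ + h) - f x₀ - deriv f x₀ * h| := by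
      have e := abs_sub (f (x₀ + h) - f x₀) (f (x₀ + h) - f x₀ - deriv f x₀ * h)
      have e2 : f (x₀ + h) - f x₀ - (f (x₀ + h) - f x₀ - deriv f x₀ * h) = deriv f x₀ * h := by
        ring
      rw [e2] at e; exact e
    rw [abs_mul, abs_of_pos hh] at habs
    have hc2 : 0 < c/2 * (h * h ^ (α/2)) := by positivity
    nlinarith [htay, hmoc, hkey, h15]
  exact lt_of_mul_lt_mul_right hfin hh.le |>.trans_le le_rfl
end derivLt

lemma openP (α δ γ lam T : ℝ) (hα : 0 < α) (hα2 : α < 2) (hδ : 0 < δ)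
    (hγ0 : 0 < γ) (hlam : 0 < lam) (hT : 0 < T)
    (ρ : ℝ → ℝ → ℝ)
    (hsmooth : ContDiffOn ℝ (⊤ : ℕ∞) (Function.uncurry ρ) (Set.univ ×ˢ Set.Icc 0 T))
    (hper : ∀ x t, ρ (x + 1) t = ρ x t)
    {t₀ : ℝ} (ht₀ : t₀ ∈ Icc 0 T)
    (hP : ∀ x y : ℝ, x ≠ y → |ρ x t₀ - ρ y t₀| < moc α δ γ lam |x - y|) :
    ∃ ε > 0, ∀ t ∈ Icc 0 T, |t - t₀| < ε →
      ∀ x y : ℝ, x ≠ y → |ρ x t - ρ y t| < moc α δ γ lam |x - y| := by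
  have hsm : ContDiffOn ℝ ∞ (Function.uncurry ρ) (Set.univ ×ˢ Set.Icc 0 T) :=
    hsmooth.of_le (by simp)
  set D : Set (ℝ × ℝ) := (univ : Set ℝ) ×ˢ Icc 0 T with hDdef
  have hDu : UniqueDiffOn ℝ D := uniqueDiffOn_univ.prod (uniqueDiffOn_Icc hT)
  set g : ℝ × ℝ → ℝ := fun p => fderivWithin ℝ (Function.uncurry ρ) D p (1, 0) with hgdef
  have hgc : ContinuousOn g D :=
    (hsm.continuousOn_fderivWithin hDu (by simp)).clm_apply continuousOn_const
  have hgd : ∀ (x t : ℝ), t ∈ Icc 0 T → HasDerivAt (fun x => ρ x t) (g (x, t)) x := by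
    intro x t ht
    have hdF : HasFDerivWithinAt (Function.uncurry ρ)
        (fderivWithin ℝ (Function.uncurry ρ) D (x, t)) D (x, t) :=
      ((hsm.differentiableOn (by simp)) (x, t) ⟨mem_univ x, ht⟩).hasFDerivWithinAt
    have hι : HasDerivWithinAt (fun x : ℝ => (x, t)) ((1:ℝ), (0:ℝ)) univ x :=
      ((hasDerivAt_id x).prodMk (hasDerivAt_const x t)).hasDerivWithinAt
    have := hdF.comp_hasDerivWithinAt x hι (fun y _ => (⟨mem_univ y, ht⟩ : (y, t) ∈ D))
    rw [hasDerivWithinAt_univ] at this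
    exact this
  have hslice : ∀ t ∈ Icc (0:ℝ) T, ContDiff ℝ ∞ (fun x => ρ x t) := by
    intro t ht
    rw [← contDiffOn_univ]
    exact hsm.comp ((contDiff_id.prodMk contDiff_const).contDiffOn)
      (fun x _ => ⟨mem_univ x, ht⟩)
  -- periodicity of g in x
  have hgper : ∀ z (n : ℤ) t, t ∈ Icc (0:ℝ) T → g (z - n, t) = g (z, t) := by
    intro z n t ht
    have hper1 : Function.Periodic (fun w => g (w, t)) 1 := by
      intro w
      have h1 : HasDerivAt (fun x => ρ x t) (g (w + 1, t)) (w + 1) := hgd _ _ ht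
      have h2 : HasDerivAt (fun x => ρ (x + 1) t) (g (w + 1, t)) w := by
        have := h1.comp w ((hasDerivAt_id w).add_const 1)
        simpa [Function.comp_def] using this
      have h3 : (fun x : ℝ => ρ (x + 1) t) = fun x => ρ x t :=
        funext fun x => hper x t
      rw [h3] at h2
      exact h2.unique (hgd w t ht)
    simpa using hper1.sub_int_mul_eq (x := z) n
  have hρper : ∀ x (n : ℤ) t, ρ (x - n) t = ρ x t := by
    intro x n t
    have : Function.Periodic (fun y => ρ y t) 1 := fun y => hper y t
    simpa using this.sub_int_mul_eq (x := x) n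
  -- Step A: max of |∂ₓρ(·,t₀)| on [0,1]
  have hgt₀cont : ContinuousOn (fun x : ℝ => |g (x, t₀)|) (Icc 0 1) := by
    apply ContinuousOn.abs
    apply hgc.comp (Continuous.continuousOn (by fun_prop))
    exact fun x _ => ⟨mem_univ x, ht₀⟩
  obtain ⟨xs, hxsmem, hxsmax⟩ :=
    isCompact_Icc.exists_isMaxOn (⟨0, by norm_num⟩ : (Icc (0:ℝ) 1).Nonempty) hgt₀cont
  set M := |g (xs, t₀)| with hMdef
  have hM : M < δ * lam⁻¹ := by
    have hd := (hgd xs t₀ ht₀).deriv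
    rw [hMdef, ← hd]
    exact deriv_lt hα hα2 hδ hγ0 hlam (hslice t₀ ht₀) hP xs
  set m := (M + δ * lam⁻¹) / 2 with hmdef
  have hMm : M < m := by rw [hmdef]; linarith
  have hms : m < δ * lam⁻¹ := by rw [hmdef]; linarith
  have hm0 : 0 ≤ m := le_trans (abs_nonneg _) hMm.le
  -- Step B: time window for the derivative bound on [0,1]
  have hD₁ : IsCompact ((Icc (0:ℝ) 1) ×ˢ (Icc (0:ℝ) T)) := isCompact_Icc.prod isCompact_Icc
  have hD₁sub : (Icc (0:ℝ) 1) ×ˢ (Icc (0:ℝ) T) ⊆ D := fun p hp => ⟨mem_univ _, hp.2⟩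
  obtain ⟨ε₁, hε₁0, hB⟩ := slice_gap hD₁
    (h := fun p => m - |g p|)
    (continuousOn_const.sub (hgc.mono hD₁sub).abs)
    (t₀ := t₀)
    (by
      rintro ⟨x, t⟩ hp rfl
      have := hxsmax hp.1
      simp only [mem_setOf_eq] at this
      simp only [sub_pos]
      exact lt_of_le_of_lt this hMm)
  -- derivative bound for all x
  have hgbd : ∀ z t, t ∈ Icc (0:ℝ) T → |t - t₀| < ε₁ → |g (z, t)| ≤ m := by
    intro z t ht hts
    have hfr : Int.fract z ∈ Icc (0:ℝ) 1 := ⟨Int.fract_nonneg z, (Int.fract_lt_one z).le⟩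
    have := hB (Int.fract z, t) (mk_mem_prod hfr ht) hts
    simp only [sub_pos] at this
    have he : g (Int.fract z, t) = g (z, t) := by
      rw [Int.fract]
      exact hgper z ⌊z⌋ t ht
    rw [he] at this
    exact this.le
  -- near-diagonal Lipschitz bound
  have hlipt : ∀ t ∈ Icc (0:ℝ) T, |t - t₀| < ε₁ → ∀ x y : ℝ,
      |ρ x t - ρ y t| ≤ m * |x - y| := by
    intro t ht hts x y
    have := convex_univ.norm_image_sub_le_of_norm_hasDerivWithin_le
      (f := fun x => ρ x t) (f' := fun z => g (z, t))
      (fun z _ => (hgd z t ht).hasDerivWithinAt) (fun z _ => hgbd z t ht hts)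
      (mem_univ y) (mem_univ x)
    simpa [Real.norm_eq_abs] using this
  -- choose η
  set c := δ / 4 * lam ^ (-(1:ℝ) - α/2) with hcdef
  have hcpos : 0 < c := by
    have := Real.rpow_pos_of_pos hlam (-(1:ℝ) - α/2); positivity
  set s₀ := δ * lam⁻¹ with hs₀def
  have hsm0 : 0 < s₀ - m := by rw [hs₀def]; linarith
  set η := min lam (((s₀ - m) / (2 * c)) ^ ((2:ℝ)/α)) with hηdef
  have hη2pos : (0:ℝ) < ((s₀ - m) / (2 * c)) ^ ((2:ℝ)/α) :=
    Real.rpow_pos_of_pos (by positivity) _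
  have hηpos : 0 < η := lt_min hlam hη2pos
  have hηlam : η ≤ lam := min_le_left _ _
  have hnear : ∀ ξ : ℝ, 0 < ξ → ξ ≤ η → m * ξ < moc α δ γ lam ξ := by
    intro ξ hξ hξη
    have hξlam : ξ ≤ lam := hξη.trans hηlam
    rw [moc, if_pos hξlam]
    have h1 : ξ ^ ((1:ℝ) + α/2) = ξ * ξ ^ (α/2) := by
      rw [Real.rpow_add hξ, Real.rpow_one]
    have h2 : ξ ^ (α/2) ≤ (((s₀ - m) / (2 * c)) ^ ((2:ℝ)/α)) ^ (α/2) :=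
      Real.rpow_le_rpow hξ.le (hξη.trans (min_le_right _ _)) (by positivity)
    have h3 : (((s₀ - m) / (2 * c)) ^ ((2:ℝ)/α)) ^ (α/2) = (s₀ - m) / (2 * c) := by
      rw [← Real.rpow_mul (by positivity),
        show (2:ℝ)/α * (α/2) = 1 by field_simp, Real.rpow_one]
    have h4 : c * ξ ^ (α/2) ≤ (s₀ - m) / 2 := by
      rw [h3] at h2
      calc c * ξ ^ (α/2) ≤ c * ((s₀ - m) / (2 * c)) := by
            exact mul_le_mul_of_nonneg_left h2 hcpos.le
        _ = (s₀ - m) / 2 := by field_simp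
    have h5 : c * ξ ^ ((1:ℝ) + α/2) ≤ (s₀ - m) / 2 * ξ := by
      rw [h1, show c * (ξ * ξ ^ (α/2)) = (c * ξ ^ (α/2)) * ξ by ring]
      exact mul_le_mul_of_nonneg_right h4 hξ.le
    have hmoceq : δ * lam⁻¹ * ξ - δ / 4 * lam ^ (-(1:ℝ) - α/2) * ξ ^ (1 + α/2)
        = s₀ * ξ - c * ξ ^ ((1:ℝ) + α/2) := by rw [hs₀def, hcdef]
    rw [hmoceq]
    nlinarith [mul_pos hsm0 hξ]
  -- far region
  set K₂ := {p : ℝ × ℝ | p.1 ∈ Icc (0:ℝ) 1 ∧ η ≤ |p.1 - p.2| ∧ |p.1 - p.2| ≤ 1/2}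
    with hK₂def
  have hK₂closed : IsClosed K₂ := by
    apply IsClosed.inter (isClosed_Icc.preimage continuous_fst)
    exact IsClosed.inter
      (isClosed_le continuous_const (continuous_fst.sub continuous_snd).abs)
      (isClosed_le (continuous_fst.sub continuous_snd).abs continuous_const)
  have hK₂c : IsCompact K₂ := by
    apply IsCompact.of_isClosed_subset (isCompact_Icc.prod
      (isCompact_Icc (a := (-1:ℝ)) (b := 2))) hK₂closed
    rintro ⟨x, y⟩ ⟨hx, _, hxy2⟩
    have := abs_le.mp hxy2
    exact ⟨hx, by constructor <;> [linarith [hx.1]; linarith [hx.2]]⟩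
  have hD₂ : IsCompact (K₂ ×ˢ Icc (0:ℝ) T) := hK₂c.prod isCompact_Icc
  have hmoccont := moc_continuous hα hδ hγ0 hlam
  have hh₂cont : ContinuousOn
      (fun q : (ℝ × ℝ) × ℝ => moc α δ γ lam |q.1.1 - q.1.2| - |ρ q.1.1 q.2 - ρ q.1.2 q.2|)
      (K₂ ×ˢ Icc (0:ℝ) T) := by
    apply ContinuousOn.sub
    · exact (hmoccont.comp ((continuous_fst.fst.sub continuous_fst.snd).abs)).continuousOn
    · apply ContinuousOn.abs
      have cont1 : Continuous (fun q : (ℝ × ℝ) × ℝ => (q.1.1, q.2)) := by fun_prop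
      have cont2 : Continuous (fun q : (ℝ × ℝ) × ℝ => (q.1.2, q.2)) := by fun_prop
      apply ContinuousOn.sub
      · exact hsm.continuousOn.comp cont1.continuousOn (fun q hq => ⟨mem_univ _, hq.2⟩)
      · exact hsm.continuousOn.comp cont2.continuousOn (fun q hq => ⟨mem_univ _, hq.2⟩)
  obtain ⟨ε₂, hε₂0, hF⟩ := slice_gap hD₂ hh₂cont (t₀ := t₀)
    (by
      rintro ⟨⟨x, y⟩, t⟩ hq rfl
      have hxy : x ≠ y := by
        intro e
        have := hq.1.2.1
        rw [e, sub_self, abs_zero] at this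
        linarith
      simp only [sub_pos]
      exact hP x y hxy)
  refine ⟨min ε₁ ε₂, lt_min hε₁0 hε₂0, ?_⟩
  intro t ht hts x y hxy
  have hts1 : |t - t₀| < ε₁ := lt_of_lt_of_le hts (min_le_left _ _)
  have hts2 : |t - t₀| < ε₂ := lt_of_lt_of_le hts (min_le_right _ _)
  have habsxy : 0 < |x - y| := abs_pos.mpr (sub_ne_zero.mpr hxy)
  -- reduction to the fundamental domain
  set x' := Int.fract x with hx'def
  set z := x' - (y - ⌊x⌋) with hzdef
  have hzxy : z = x - y := by rw [hzdef, hx'def, Int.fract]; ring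
  set y' := x' - (z - round z) with hy'def
  have hx'mem : x' ∈ Icc (0:ℝ) 1 := ⟨Int.fract_nonneg x, (Int.fract_lt_one x).le⟩
  have hρx : ρ x' t = ρ x t := by rw [hx'def, Int.fract]; exact hρper x ⌊x⌋ t
  have hρy : ρ y' t = ρ y t := by
    have : y' = y - (⌊x⌋ - round z) := by rw [hy'def, hzdef, hx'def, Int.fract]; push_cast; ring
    rw [this]
    exact_mod_cast hρper y (⌊x⌋ - round z) t
  have hx'y' : x' - y' = z - round z := by rw [hy'def]; ring
  have hhalf : |x' - y'| ≤ 1/2 := by rw [hx'y']; exact abs_sub_round z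
  have hlexy : |x' - y'| ≤ |x - y| := by
    rw [hx'y', ← hzxy]; exact abs_sub_round_le_abs z
  rcases eq_or_ne x' y' with heq | hne
  · rw [← hρx, ← hρy, heq, sub_self, abs_zero]
    exact moc_pos hα hα2 hδ hγ0 hlam habsxy
  · have h0' : 0 < |x' - y'| := abs_pos.mpr (sub_ne_zero.mpr hne)
    have hmono := moc_mono hα hα2 hδ hγ0 hlam h0' hlexy
    rw [← hρx, ← hρy]
    rcases le_or_gt |x' - y'| η with hcase | hcase
    · calc |ρ x' t - ρ y' t| ≤ m * |x' - y'| := hlipt t ht hts1 x' y'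
        _ < moc α δ γ lam |x' - y'| := hnear _ h0' hcase
        _ ≤ moc α δ γ lam |x - y| := hmono
    · have hq : ((x', y'), t) ∈ K₂ ×ˢ Icc (0:ℝ) T :=
        mk_mem_prod ⟨hx'mem, hcase.le, hhalf⟩ ht
      have := hF ((x', y'), t) hq hts2
      simp only [sub_pos] at this
      exact lt_of_lt_of_le this hmono

/-- (The only possible breakthrough scenario.) If a smooth
space-periodic `ρ` obeys `ω` at time `0` and loses it at some time in `(0,T]`, then at the
first such time `t₁ = inf S` the non-strict bound still holds everywhere and there are two
distinct points where equality `ρ(x,t₁) − ρ(y,t₁) = ω(|x−y|)` is attained. -/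
theorem stmt13 (α δ γ lam T : ℝ) (hα : 0 < α) (hα2 : α < 2) (hδ : 0 < δ)
    (hγ0 : 0 < γ) (hγ : γ < δ / 2) (hlam : 0 < lam) (hT : 0 < T)
    (ρ : ℝ → ℝ → ℝ)
    (hsmooth : ContDiffOn ℝ (⊤ : ℕ∞) (Function.uncurry ρ) (Set.univ ×ˢ Set.Icc 0 T))
    (hper : ∀ x t, ρ (x + 1) t = ρ x t)
    (h0 : ∀ x y : ℝ, x ≠ y → |ρ x 0 - ρ y 0| < moc α δ γ lam |x - y|)
    (S : Set ℝ)
    (hS : S = {t ∈ Set.Ioc 0 T |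
      ¬ ∀ x y : ℝ, x ≠ y → |ρ x t - ρ y t| < moc α δ γ lam |x - y|})
    (hne : S.Nonempty) :
    0 < sInf S ∧
    (∀ x y : ℝ, x ≠ y → |ρ x (sInf S) - ρ y (sInf S)| ≤ moc α δ γ lam |x - y|) ∧
    (∃ x y : ℝ, x ≠ y ∧ ρ x (sInf S) - ρ y (sInf S) = moc α δ γ lam |x - y|) := by
  have hSsub : S ⊆ Ioc 0 T := by rw [hS]; intro t ht; exact ht.1
  have hbdd : BddBelow S := ⟨0, fun s hs => (hSsub hs).1.le⟩
  obtain ⟨ε₀, hε₀0, h0open⟩ := openP α δ γ lam T hα hα2 hδ hγ0 hlam hT ρ hsmooth hper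
    (t₀ := 0) ⟨le_refl 0, hT.le⟩ h0
  have hlow : ∀ s ∈ S, ε₀ ≤ s := by
    intro s hs
    by_contra hc; push_neg at hc
    have hsIoc := hSsub hs
    have hPs : ∀ x y : ℝ, x ≠ y → |ρ x s - ρ y s| < moc α δ γ lam |x - y| :=
      h0open s ⟨hsIoc.1.le, hsIoc.2⟩ (by rw [sub_zero, abs_of_pos hsIoc.1]; exact hc)
    rw [hS] at hs; exact hs.2 hPs
  have ht₁pos : 0 < sInf S := lt_of_lt_of_le hε₀0 (le_csInf hne hlow)
  obtain ⟨s₁, hs₁⟩ := hne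
  have ht₁T : sInf S ≤ T := le_trans (csInf_le hbdd hs₁) (hSsub hs₁).2
  have ht₁mem : sInf S ∈ Icc (0:ℝ) T := ⟨ht₁pos.le, ht₁T⟩
  have hnotP : ¬ ∀ x y : ℝ, x ≠ y →
      |ρ x (sInf S) - ρ y (sInf S)| < moc α δ γ lam |x - y| := by
    intro hPt
    obtain ⟨ε, hε0, hop⟩ := openP α δ γ lam T hα hα2 hδ hγ0 hlam hT ρ hsmooth hper
      ht₁mem hPt
    obtain ⟨s, hsS, hslt⟩ := Real.lt_sInf_add_pos ⟨s₁, hs₁⟩ hε0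
    have h1 : sInf S ≤ s := csInf_le hbdd hsS
    have hPs : ∀ x y : ℝ, x ≠ y → |ρ x s - ρ y s| < moc α δ γ lam |x - y| :=
      hop s ⟨(hSsub hsS).1.le, (hSsub hsS).2⟩
        (by rw [abs_of_nonneg (by linarith)]; linarith)
    rw [hS] at hsS; exact hsS.2 hPs
  have hcont : ∀ x : ℝ, ContinuousOn (fun t => ρ x t) (Icc 0 T) := by
    intro x
    have c1 : Continuous (fun t : ℝ => (x, t)) := by fun_prop
    exact hsmooth.continuousOn.comp c1.continuousOn (fun t ht => ⟨mem_univ _, ht⟩)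
  have hnonstrict : ∀ x y : ℝ, x ≠ y →
      |ρ x (sInf S) - ρ y (sInf S)| ≤ moc α δ γ lam |x - y| := by
    intro x y hxy
    set t₁ := sInf S with ht₁def
    set u : ℕ → ℝ := fun n => t₁ - t₁ / (n + 2) with hudef
    have hupos : ∀ n : ℕ, 0 < u n := by
      intro n
      have hn : (0:ℝ) ≤ (n:ℝ) := Nat.cast_nonneg n
      have : t₁ / ((n:ℝ) + 2) < t₁ := div_lt_self ht₁pos (by linarith)
      simp only [hudef]; linarith
    have huLt : ∀ n : ℕ, u n < t₁ := by
      intro n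
      have : (0:ℝ) < t₁ / ((n:ℝ) + 2) := by positivity
      simp only [hudef]; linarith
    have hu1 : ∀ n, u n ∈ Icc (0:ℝ) T := fun n =>
      ⟨(hupos n).le, le_trans (huLt n).le ht₁T⟩
    have huP : ∀ n, ∀ a b : ℝ, a ≠ b → |ρ a (u n) - ρ b (u n)| < moc α δ γ lam |a - b| := by
      intro n
      have hnot : u n ∉ S := fun hmem => absurd (csInf_le hbdd hmem) (not_le.mpr (huLt n))
      rw [hS] at hnot
      simp only [mem_setOf_eq, not_and, not_not] at hnot
      exact hnot ⟨hupos n, (hu1 n).2⟩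
    have hlim : Tendsto u atTop (𝓝 t₁) := by
      have h1 : Tendsto (fun n : ℕ => t₁ / ((n:ℝ) + 2)) atTop (𝓝 0) :=
        Tendsto.div_atTop tendsto_const_nhds
          (tendsto_atTop_add_const_right atTop 2 tendsto_natCast_atTop_atTop)
      have h2 := (tendsto_const_nhds (x := t₁) (f := atTop (α := ℕ))).sub h1
      simpa [hudef] using h2
    have hρlim : Tendsto (fun n => |ρ x (u n) - ρ y (u n)|) atTop
        (𝓝 |ρ x t₁ - ρ y t₁|) := by
      have hwithin : Tendsto u atTop (𝓝[Icc (0:ℝ) T] t₁) :=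
        tendsto_nhdsWithin_iff.mpr ⟨hlim, Eventually.of_forall hu1⟩
      have hx := (hcont x t₁ ht₁mem).tendsto.comp hwithin
      have hy := (hcont y t₁ ht₁mem).tendsto.comp hwithin
      exact (hx.sub hy).abs
    exact le_of_tendsto hρlim (Eventually.of_forall fun n => (huP n x y hxy).le)
  refine ⟨ht₁pos, hnonstrict, ?_⟩
  push_neg at hnotP
  obtain ⟨x, y, hxy, hge⟩ := hnotP
  have hωnn : 0 ≤ moc α δ γ lam |x - y| :=
    (moc_pos hα hα2 hδ hγ0 hlam (abs_pos.mpr (sub_ne_zero.mpr hxy))).le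
  have heq : |ρ x (sInf S) - ρ y (sInf S)| = moc α δ γ lam |x - y| :=
    le_antisymm (hnonstrict x y hxy) hge
  rcases (abs_eq hωnn).mp heq with h | h
  · exact ⟨x, y, hxy, h⟩
  · refine ⟨y, x, hxy.symm, ?_⟩
    rw [abs_sub_comm y x]
    linarith
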